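/- The high-frequency energy of the output of the GCN decays exponentially in the depth: Σ_{j=1}^{m_K} Σ_{i=2}^{N} |⟨f_j^(K), h_i⟩|² ≤ μ_high^{2K} · ‖F^(0)‖_F². -/
import Mathlib


open Matrix

noncomputable section

/-- Euclidean (2-)norm on `ℝ^N`. -/
def rnorm2 {N : ℕ} (f : Fin N → ℝ) : ℝ := Real.sqrt (∑ i, f i ^ 2)

/-- Frobenius norm of a real matrix. -/
def frob {N m : ℕ} (M : Matrix (Fin N) (Fin m) ℝ) : ℝ := Real.sqrt (∑ i, ∑ j, M i j ^ 2)

/-- Entrywise ReLU of a vector. -/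
def reluV {N : ℕ} (f : Fin N → ℝ) : Fin N → ℝ := fun i => max (f i) 0

/-- Entrywise ReLU of a matrix. -/
def reluM {N m : ℕ} (M : Matrix (Fin N) (Fin m) ℝ) : Matrix (Fin N) (Fin m) ℝ :=
  Matrix.of fun i j => max (M i j) 0

/-- `P f = f - ⟨f, h⟩ h`. -/
def Pv {N : ℕ} (h : Fin N → ℝ) (f : Fin N → ℝ) : Fin N → ℝ := f - (f ⬝ᵥ h) • h

/-- `P` applied columnwise to a matrix. -/
def Pcol {N m : ℕ} (h : Fin N → ℝ) (M : Matrix (Fin N) (Fin m) ℝ) :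
    Matrix (Fin N) (Fin m) ℝ :=
  Matrix.of fun i j => M i j - ((fun x => M x j) ⬝ᵥ h) * h i

/-- `μ_high = max{|μ_2|, …, |μ_N|}` (indices `i : Fin N` with `i ≥ 1`). -/
def muHigh {N : ℕ} (μ : Fin N → ℝ) : ℝ := ⨆ i : {i : Fin N // 0 < (i : ℕ)}, |μ i.1|

/-! ### Auxiliary lemmas -/

lemma relu_contract' (u v : ℝ) : (max u 0 - max v 0) ^ 2 ≤ (u - v) ^ 2 := by
  rcases le_total u 0 with hu | hu <;> rcases le_total v 0 with hv | hv <;>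
    simp [max_eq_left, max_eq_right, hu, hv] <;> nlinarith

lemma rows_complete' {N : ℕ} (h : Fin N → Fin N → ℝ)
    (hortho : ∀ i j, h i ⬝ᵥ h j = if i = j then 1 else 0) (x y : Fin N) :
    ∑ i, h i x * h i y = if x = y then 1 else 0 := by
  set Q : Matrix (Fin N) (Fin N) ℝ := Matrix.of h with hQdef
  have hQ : Q * Qᵀ = 1 := by
    ext i j
    simpa [Matrix.mul_apply, Matrix.one_apply, hQdef, dotProduct] using hortho i j
  have hQ' : Qᵀ * Q = 1 := mul_eq_one_comm.mp hQ
  have := congrFun (congrFun hQ' x) y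
  simpa [Matrix.mul_apply, Matrix.one_apply, hQdef, mul_comm] using this

section Aux
variable {N : ℕ} (h : Fin N → Fin N → ℝ)
  (hortho : ∀ i j, h i ⬝ᵥ h j = if i = j then 1 else 0)
include hortho

lemma parseval' (g : Fin N → ℝ) :
    ∑ i, (g ⬝ᵥ h i) ^ 2 = ∑ x, g x ^ 2 := by
  have key := rows_complete' h hortho
  calc ∑ i, (g ⬝ᵥ h i) ^ 2
      = ∑ i, ∑ x, ∑ y, (g x * g y) * (h i x * h i y) := by
        refine Finset.sum_congr rfl fun i _ => ?_
        rw [sq, dotProduct, Finset.sum_mul_sum]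
        refine Finset.sum_congr rfl fun x _ => Finset.sum_congr rfl fun y _ => by ring
    _ = ∑ x, ∑ y, (g x * g y) * ∑ i, h i x * h i y := by
        rw [Finset.sum_comm]
        refine Finset.sum_congr rfl fun x _ => ?_
        rw [Finset.sum_comm]
        refine Finset.sum_congr rfl fun y _ => ?_
        rw [Finset.mul_sum]
    _ = ∑ x, g x ^ 2 := by
        refine Finset.sum_congr rfl fun x _ => ?_
        simp only [key]
        simp [sq, mul_ite]

lemma hfe_eq (hN : 2 ≤ N) (g : Fin N → ℝ) :
    ∑ i ∈ Finset.univ.filter (fun i : Fin N => 0 < (i : ℕ)), (g ⬝ᵥ h i) ^ 2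
      = ∑ x, Pv (h ⟨0, by omega⟩) g x ^ 2 := by
  have hN0 : 0 < N := by omega
  set h0 : Fin N → ℝ := h ⟨0, hN0⟩ with hh0
  have key : ∀ i, (Pv h0 g) ⬝ᵥ h i = if (i : ℕ) = 0 then 0 else g ⬝ᵥ h i := by
    intro i
    have : (Pv h0 g) ⬝ᵥ h i = g ⬝ᵥ h i - (g ⬝ᵥ h0) * (h0 ⬝ᵥ h i) := by
      simp [Pv, dotProduct, sub_mul, Finset.sum_sub_distrib, Finset.mul_sum, mul_assoc]
    rw [this, hh0, hortho]
    rcases Nat.eq_zero_or_pos (i : ℕ) with hi | hi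
    · have : (⟨0, hN0⟩ : Fin N) = i := by ext; simp [hi]
      simp [this, hi]
    · have : (⟨0, hN0⟩ : Fin N) ≠ i := by intro e; rw [← e] at hi; simp at hi
      simp [this, Nat.pos_iff_ne_zero.mp hi]
  rw [← parseval' h hortho (Pv h0 g)]
  rw [← Finset.sum_filter_add_sum_filter_not Finset.univ (fun i : Fin N => 0 < (i:ℕ))
        (fun i => (Pv h0 g ⬝ᵥ h i) ^ 2)]
  have e1 : ∑ i ∈ Finset.univ.filter (fun i : Fin N => 0 < (i : ℕ)), (Pv h0 g ⬝ᵥ h i) ^ 2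
      = ∑ i ∈ Finset.univ.filter (fun i : Fin N => 0 < (i : ℕ)), (g ⬝ᵥ h i) ^ 2 := by
    refine Finset.sum_congr rfl fun i hi => ?_
    simp only [Finset.mem_filter] at hi
    rw [key i, if_neg (by omega)]
  have e2 : ∑ i ∈ Finset.univ.filter (fun i : Fin N => ¬ 0 < (i : ℕ)), (Pv h0 g ⬝ᵥ h i) ^ 2 = 0 := by
    refine Finset.sum_eq_zero fun i hi => ?_
    simp only [Finset.mem_filter] at hi
    rw [key i, if_pos (by omega)]
    simp
  rw [e1, e2, add_zero]

lemma pv_min' (g : Fin N → ℝ) (c : ℝ) (hN0 : 0 < N) :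
    ∑ x, Pv (h ⟨0, hN0⟩) g x ^ 2 ≤ ∑ x, (g x - c * h ⟨0, hN0⟩ x) ^ 2 := by
  set h0 : Fin N → ℝ := h ⟨0, hN0⟩ with hh0
  have hnorm : ∑ x, h0 x ^ 2 = 1 := by
    have := hortho ⟨0, hN0⟩ ⟨0, hN0⟩
    simpa [dotProduct, sq] using this
  set a : ℝ := g ⬝ᵥ h0 with ha
  have ha' : ∑ x, g x * h0 x = a := rfl
  have expand : ∀ c : ℝ, ∑ x, (g x - c * h0 x) ^ 2
      = ∑ x, g x ^ 2 - 2 * c * a + c ^ 2 := by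
    intro c
    have : ∀ x, (g x - c * h0 x) ^ 2 = g x ^2 - 2*c*(g x * h0 x) + c^2 * h0 x ^2 := by
      intro x; ring
    simp only [this, Finset.sum_add_distrib, Finset.sum_sub_distrib, ← Finset.mul_sum, ha',
      hnorm, mul_one]
  have lhs : ∑ x, Pv h0 g x ^ 2 = ∑ x, g x ^ 2 - a ^ 2 := by
    have : ∀ x, Pv h0 g x = g x - a * h0 x := by
      intro x; simp [Pv, ha, hh0]
    simp only [this]
    rw [expand a]; ring
  rw [lhs, expand c]
  nlinarith [sq_nonneg (c - a)]

lemma relu_step (hN0 : 0 < N) (h1pos : ∀ x, 0 ≤ h ⟨0, hN0⟩ x) (g : Fin N → ℝ) :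
    ∑ x, Pv (h ⟨0, hN0⟩) (reluV g) x ^ 2 ≤ ∑ x, Pv (h ⟨0, hN0⟩) g x ^ 2 := by
  set h0 : Fin N → ℝ := h ⟨0, hN0⟩ with hh0
  set a : ℝ := g ⬝ᵥ h0 with ha
  calc ∑ x, Pv h0 (reluV g) x ^ 2
      ≤ ∑ x, (reluV g x - max a 0 * h0 x) ^ 2 := pv_min' h hortho _ _ hN0
    _ ≤ ∑ x, (g x - a * h0 x) ^ 2 := by
        refine Finset.sum_le_sum fun x _ => ?_
        have hmx : max a 0 * h0 x = max (a * h0 x) 0 := by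
          rcases le_total a 0 with h' | h'
          · rw [max_eq_right h', zero_mul, max_eq_right (by nlinarith [h1pos x])]
          · rw [max_eq_left h', max_eq_left (by nlinarith [h1pos x])]
        rw [hmx]
        simpa [reluV] using relu_contract' (g x) (a * h0 x)
    _ = ∑ x, Pv h0 g x ^ 2 := by
        refine Finset.sum_congr rfl fun x _ => ?_
        simp [Pv, ha]

omit hortho in
lemma muHigh_nonneg' (hN : 2 ≤ N) (μ : Fin N → ℝ) : 0 ≤ muHigh μ := by
  have hne : Nonempty {i : Fin N // 0 < (i : ℕ)} := ⟨⟨⟨1, by omega⟩, by simp⟩⟩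
  refine le_trans (abs_nonneg (μ hne.some.1)) ?_
  unfold muHigh
  exact le_ciSup (Set.Finite.bddAbove
    (Set.finite_range (fun i : {i : Fin N // 0 < (i : ℕ)} => |μ i.1|))) hne.some

omit hortho in
lemma le_muHigh' (μ : Fin N → ℝ) (i : Fin N) (hi : 0 < (i : ℕ)) : |μ i| ≤ muHigh μ := by
  unfold muHigh
  exact le_ciSup (Set.Finite.bddAbove
    (Set.finite_range (fun i : {i : Fin N // 0 < (i : ℕ)} => |μ i.1|)))
    (⟨i, hi⟩ : {i : Fin N // 0 < (i : ℕ)})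

lemma H_step (hN : 2 ≤ N) (H : Matrix (Fin N) (Fin N) ℝ) (hH : H.IsSymm)
    (μ : Fin N → ℝ) (heig : ∀ i, H *ᵥ h i = μ i • h i) (g : Fin N → ℝ) :
    ∑ x, Pv (h ⟨0, by omega⟩) (H *ᵥ g) x ^ 2
      ≤ muHigh μ ^ 2 * ∑ x, Pv (h ⟨0, by omega⟩) g x ^ 2 := by
  rw [← hfe_eq h hortho hN, ← hfe_eq h hortho hN]
  rw [Finset.mul_sum]
  refine Finset.sum_le_sum fun i hi => ?_
  simp only [Finset.mem_filter] at hi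
  have hdot : (H *ᵥ g) ⬝ᵥ h i = μ i * (g ⬝ᵥ h i) := by
    calc (H *ᵥ g) ⬝ᵥ h i = g ⬝ᵥ (Hᵀ *ᵥ h i) := by
          rw [dotProduct_comm, Matrix.dotProduct_mulVec, dotProduct_comm,
            ← Matrix.mulVec_transpose]
      _ = g ⬝ᵥ (μ i • h i) := by rw [hH.eq, heig]
      _ = μ i * (g ⬝ᵥ h i) := by simp [dotProduct_smul, smul_eq_mul]
  rw [hdot, mul_pow]
  have h1 : μ i ^ 2 ≤ muHigh μ ^ 2 := by
    have := le_muHigh' μ i hi.2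
    nlinarith [abs_nonneg (μ i), sq_abs (μ i)]
  nlinarith [sq_nonneg (g ⬝ᵥ h i)]

end Aux

lemma W_step {N p q : ℕ} (h0 : Fin N → ℝ)
    (F : Matrix (Fin N) (Fin p) ℝ) (W : Matrix (Fin p) (Fin q) ℝ) :
    ∑ j : Fin q, ∑ x, Pv h0 (fun x => (F * W) x j) x ^ 2
      ≤ (∑ l, ∑ j, W l j ^ 2) * ∑ l : Fin p, ∑ x, Pv h0 (fun x => F x l) x ^ 2 := by
  have lin : ∀ (j : Fin q) (x : Fin N),
      Pv h0 (fun x => (F * W) x j) x = ∑ l, W l j * Pv h0 (fun x => F x l) x := by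
    intro j x
    have hdot : (fun x => (F * W) x j) ⬝ᵥ h0
        = ∑ l, W l j * ((fun x => F x l) ⬝ᵥ h0) := by
      simp only [dotProduct, Matrix.mul_apply, Finset.sum_mul]
      rw [Finset.sum_comm]
      exact Finset.sum_congr rfl fun l _ =>
        by rw [Finset.mul_sum]; exact Finset.sum_congr rfl fun y _ => by ring
    have e1 : Pv h0 (fun x => (F * W) x j) x
        = (F * W) x j - ((fun x => (F * W) x j) ⬝ᵥ h0) * h0 x := rfl
    have e2 : ∀ l, Pv h0 (fun x => F x l) x
        = F x l - ((fun x => F x l) ⬝ᵥ h0) * h0 x := fun l => rfl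
    rw [e1, hdot]
    simp only [e2, Matrix.mul_apply, mul_sub, Finset.sum_sub_distrib, Finset.sum_mul]
    congr 1
    · exact Finset.sum_congr rfl fun l _ => by ring
    · exact Finset.sum_congr rfl fun l _ => by ring
  calc ∑ j : Fin q, ∑ x, Pv h0 (fun x => (F * W) x j) x ^ 2
      ≤ ∑ j : Fin q, ∑ x, (∑ l, W l j ^ 2) * ∑ l, Pv h0 (fun x => F x l) x ^ 2 := by
        refine Finset.sum_le_sum fun j _ => Finset.sum_le_sum fun x _ => ?_
        rw [lin j x]
        exact Finset.sum_mul_sq_le_sq_mul_sq _ _ _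
    _ = (∑ j : Fin q, ∑ l, W l j ^ 2) * ∑ x, ∑ l, Pv h0 (fun x => F x l) x ^ 2 := by
        rw [Finset.sum_mul]
        exact Finset.sum_congr rfl fun j _ => (Finset.mul_sum _ _ _).symm
    _ = (∑ l, ∑ j, W l j ^ 2) * ∑ l : Fin p, ∑ x, Pv h0 (fun x => F x l) x ^ 2 := by
        rw [Finset.sum_comm (f := fun j l => W l j ^ 2)]
        congr 1
        exact Finset.sum_comm

/-- the high-frequency energy of the output of the GCN decays
exponentially in the depth:
`Σ_{j=1}^{m_K} Σ_{i=2}^{N} |⟨f_j^(K), h_i⟩|² ≤ μ_high^{2K} ‖F^(0)‖_F²`. -/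
theorem stmt12 (N K : ℕ) (hN : 2 ≤ N) (hK : 1 ≤ K)
    (H : Matrix (Fin N) (Fin N) ℝ) (hH : H.IsSymm)
    (h : Fin N → Fin N → ℝ)
    (hortho : ∀ i j, h i ⬝ᵥ h j = if i = j then 1 else 0)
    (μ : Fin N → ℝ) (heig : ∀ i, H *ᵥ h i = μ i • h i)
    (h1pos : ∀ x, 0 ≤ h ⟨0, by omega⟩ x)
    (m : ℕ → ℕ) (W : ∀ k, Matrix (Fin (m k)) (Fin (m (k + 1))) ℝ)
    (hW : ∀ k, k < K → frob (W k) ≤ 1)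
    (F : ∀ k, Matrix (Fin N) (Fin (m k)) ℝ)
    (hF : ∀ k, k < K → F (k + 1) = reluM (H * F k * W k))
    :
    ∑ j : Fin (m K), ∑ i ∈ Finset.univ.filter (fun i : Fin N => 0 < (i : ℕ)),
        ((fun x => F K x j) ⬝ᵥ h i) ^ 2 ≤
      muHigh μ ^ (2 * K) * frob (F 0) ^ 2 := by
  have hN0 : 0 < N := by omega
  set h0 : Fin N → ℝ := h ⟨0, hN0⟩ with hh0
  set Φ : ℕ → ℝ := fun k => ∑ j : Fin (m k), ∑ x, Pv h0 (fun x => F k x j) x ^ 2 with hΦ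
  have Φnn : ∀ k, 0 ≤ Φ k := fun k =>
    Finset.sum_nonneg fun j _ => Finset.sum_nonneg fun x _ => sq_nonneg _
  have hμnn : 0 ≤ muHigh μ := muHigh_nonneg' hN μ
  -- one step
  have step : ∀ k, k < K → Φ (k + 1) ≤ muHigh μ ^ 2 * Φ k := by
    intro k hk
    have hw2 : (∑ l, ∑ j, W k l j ^ 2) ≤ 1 := by
      have hs : 0 ≤ ∑ l, ∑ j, W k l j ^ 2 :=
        Finset.sum_nonneg fun l _ => Finset.sum_nonneg fun j _ => sq_nonneg _
      have : (∑ l, ∑ j, W k l j ^ 2) = frob (W k) ^ 2 := (Real.sq_sqrt hs).symm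
      rw [this]
      have hfnn : 0 ≤ frob (W k) := Real.sqrt_nonneg _
      nlinarith [hW k hk, hfnn]
    calc Φ (k + 1)
        = ∑ j : Fin (m (k+1)), ∑ x,
            Pv h0 (reluV (fun x => (H * F k * W k) x j)) x ^ 2 := by
          refine Finset.sum_congr rfl fun j _ => ?_
          have : (fun x => F (k+1) x j) = reluV (fun x => (H * F k * W k) x j) := by
            funext x; rw [hF k hk]; rfl
          rw [this]
      _ ≤ ∑ j : Fin (m (k+1)), ∑ x, Pv h0 (fun x => (H * F k * W k) x j) x ^ 2 :=
          Finset.sum_le_sum fun j _ => relu_step h hortho hN0 h1pos _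
      _ = ∑ j : Fin (m (k+1)), ∑ x,
            Pv h0 (H *ᵥ (fun y => (F k * W k) y j)) x ^ 2 := by
          refine Finset.sum_congr rfl fun j _ => Finset.sum_congr rfl fun x _ => ?_
          have : (fun x => (H * F k * W k) x j) = H *ᵥ (fun y => (F k * W k) y j) := by
            funext x
            rw [Matrix.mul_assoc]
            rfl
          rw [this]
      _ ≤ ∑ j : Fin (m (k+1)),
            muHigh μ ^ 2 * ∑ x, Pv h0 (fun y => (F k * W k) y j) x ^ 2 :=
          Finset.sum_le_sum fun j _ => H_step h hortho hN H hH μ heig _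
      _ = muHigh μ ^ 2 *
            ∑ j : Fin (m (k+1)), ∑ x, Pv h0 (fun y => (F k * W k) y j) x ^ 2 :=
          (Finset.mul_sum _ _ _).symm
      _ ≤ muHigh μ ^ 2 * ((∑ l, ∑ j, W k l j ^ 2) * Φ k) :=
          mul_le_mul_of_nonneg_left (W_step h0 (F k) (W k)) (sq_nonneg _)
      _ ≤ muHigh μ ^ 2 * Φ k := by
          nlinarith [Φnn k, sq_nonneg (muHigh μ), hw2,
            mul_nonneg (sq_nonneg (muHigh μ)) (Φnn k)]
  -- iterate
  have iter : ∀ k, k ≤ K → Φ k ≤ (muHigh μ ^ 2) ^ k * Φ 0 := by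
    intro k
    induction k with
    | zero => intro _; simp
    | succ n ih =>
      intro hk
      have h1 := ih (by omega)
      have h2 := step n (by omega)
      calc Φ (n + 1) ≤ muHigh μ ^ 2 * Φ n := h2
        _ ≤ muHigh μ ^ 2 * ((muHigh μ ^ 2) ^ n * Φ 0) :=
            mul_le_mul_of_nonneg_left h1 (sq_nonneg _)
        _ = (muHigh μ ^ 2) ^ (n + 1) * Φ 0 := by ring
  -- LHS equals Φ K
  have lhs_eq : ∑ j : Fin (m K), ∑ i ∈ Finset.univ.filter (fun i : Fin N => 0 < (i : ℕ)),
      ((fun x => F K x j) ⬝ᵥ h i) ^ 2 = Φ K :=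
    Finset.sum_congr rfl fun j _ => hfe_eq h hortho hN (fun x => F K x j)
  -- Φ 0 ≤ frob (F 0) ^ 2
  have hΦ0 : Φ 0 ≤ frob (F 0) ^ 2 := by
    have hs : 0 ≤ ∑ x, ∑ j, F 0 x j ^ 2 :=
      Finset.sum_nonneg fun x _ => Finset.sum_nonneg fun j _ => sq_nonneg _
    have hfr : frob (F 0) ^ 2 = ∑ x, ∑ j, F 0 x j ^ 2 := Real.sq_sqrt hs
    rw [hfr, Finset.sum_comm]
    refine Finset.sum_le_sum fun j _ => ?_
    have := pv_min' h hortho (fun x => F 0 x j) 0 hN0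
    simpa using this
  rw [lhs_eq]
  calc Φ K ≤ (muHigh μ ^ 2) ^ K * Φ 0 := iter K le_rfl
    _ ≤ (muHigh μ ^ 2) ^ K * frob (F 0) ^ 2 :=
        mul_le_mul_of_nonneg_left hΦ0 (pow_nonneg (sq_nonneg _) K)
    _ = muHigh μ ^ (2 * K) * frob (F 0) ^ 2 := by rw [pow_mul]
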